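/- (Theorem 1, estimate.) Set h_τ := [‖u(0)‖ + ∫_0^τ (α(ξ)·ν(ξ)·‖u(ξ−τ)‖^p + β(ξ)·ν(ξ)) dξ]/ν(τ). Assume α(t) > 0 for all t ≥ τ, the improper integral I := ∫_τ^∞ α(ξ)·σ(ξ)^p·ν(ξ)^{1−p} dξ converges, and ω := sup_{t ≥ τ} (β(t)/α(t))^{1/p}·exp(−∫_0^{t−τ} γ(ξ) dξ) is finite, positive, and satisfies ω < ((p−1)·I)^{−1/(p−1)} − h_τ·ν(τ). Then for all t ≥ τ, ‖u(t)‖ ≤ (1/ν(t))·[ ( (h_τ·ν(τ) + ω)^{1−p} − (p−1)·∫_τ^t α(ξ)·σ(ξ)^p·ν(ξ)^{1−p} dξ )^{−1/(p−1)} − ω ]. -/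

import Mathlib

/-!
Let `w = ν h`. First, `‖u‖ ≤ h`: on `[nτ, (n+1)τ]` the delayed arguments are already
controlled, so there the inequality for `‖u‖` and the equation for `h` differ by at most
`γ (‖u‖ - h)`, and an exponential barrier gives `‖u‖ ≤ h` on the next interval.
Next, `w' = ν (α h(t-τ)^p + β) ≥ 0`, and for `t ≥ τ` the delay identity `ν(t-τ) σ(t) = ν(t)`,
the definition of `ω` and the superadditivity of `x ↦ x^p` give `z' ≤ φ z^p` for `z = w + ω`
and `φ = α σ^p ν^(1-p)`. Hence `z^(1-p) + (p-1) ∫_τ^t φ` is nondecreasing. Since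
`z(τ) = h_τ ν(τ) + ω` by the fundamental theorem of calculus on `[0, τ]`, the smallness of `ω`
keeps `z(τ)^(1-p) - (p-1) ∫_τ^t φ ≥ z(τ)^(1-p) - (p-1) I` positive, and inverting
`x ↦ x^(1-p)` bounds `w(t) = ν(t) h(t)`.
-/

open Real MeasureTheory Set Filter ComplexInnerProductSpace

/-- `ν(t) = exp(−∫₀ᵗ γ(ξ) dξ)`. -/
noncomputable def nu (γ : ℝ → ℝ) (t : ℝ) : ℝ := Real.exp (-∫ ξ in (0:ℝ)..t, γ ξ)

/-- `σ(t) = exp(−∫_{t−τ}^t γ(ξ) dξ)`. -/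
noncomputable def sig (γ : ℝ → ℝ) (τ t : ℝ) : ℝ :=
  Real.exp (-∫ ξ in (t - τ)..t, γ ξ)

theorem nu_pos (γ : ℝ → ℝ) (t : ℝ) : 0 < nu γ t := exp_pos _

theorem sig_pos (γ : ℝ → ℝ) (τ t : ℝ) : 0 < sig γ τ t := exp_pos _

@[simp] theorem nu_zero (γ : ℝ → ℝ) : nu γ 0 = 1 := by simp [nu]

section Weights

variable {γ α : ℝ → ℝ}

theorem hasDerivAt_nu (hγ : Continuous γ) (t : ℝ) : HasDerivAt (nu γ) (-γ t * nu γ t) t := by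
  have := (hγ.integral_hasStrictDerivAt 0 t).hasDerivAt.neg.exp
  rwa [mul_comm] at this

theorem continuous_nu (hγ : Continuous γ) : Continuous (nu γ) :=
  continuous_iff_continuousAt.2 fun t => (hasDerivAt_nu hγ t).continuousAt

theorem nu_sub_mul_sig (hγ : Continuous γ) (τ t : ℝ) : nu γ (t - τ) * sig γ τ t = nu γ t := by
  rw [nu, sig, nu, ← exp_add, ← intervalIntegral.integral_add_adjacent_intervals
    (hγ.intervalIntegrable 0 (t - τ)) (hγ.intervalIntegrable (t - τ) t), neg_add]

theorem continuous_sig (hγ : Continuous γ) (τ : ℝ) : Continuous (sig γ τ) := by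
  have : sig γ τ = fun t => nu γ t / nu γ (t - τ) := funext fun t => by
    rw [← nu_sub_mul_sig hγ τ t, mul_div_cancel_left₀ _ (nu_pos γ _).ne']
  rw [this]
  exact (continuous_nu hγ).div ((continuous_nu hγ).comp (continuous_sub_right τ))
    fun t => (nu_pos γ _).ne'

theorem sig_rpow_mul_nu_rpow_mul_nu_sub_rpow (hγ : Continuous γ) (τ p t : ℝ) :
    sig γ τ t ^ p * nu γ t ^ (1 - p) * nu γ (t - τ) ^ p = nu γ t := by
  rw [mul_right_comm, ← mul_rpow (sig_pos γ τ t).le (nu_pos γ _).le, mul_comm (sig γ τ t),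
    nu_sub_mul_sig hγ, ← rpow_add (nu_pos γ t), add_sub_cancel, rpow_one]

theorem continuous_weight (hγ : Continuous γ) (hα : Continuous α) (τ p : ℝ) :
    Continuous fun t => α t * sig γ τ t ^ p * nu γ t ^ (1 - p) :=
  (hα.mul ((continuous_sig hγ τ).rpow_const fun t => .inl (sig_pos γ τ t).ne')).mul
    ((continuous_nu hγ).rpow_const fun t => .inl (nu_pos γ t).ne')

theorem weight_nonneg (hα : ∀ t, 0 ≤ α t) (τ p t : ℝ) :
    0 ≤ α t * sig γ τ t ^ p * nu γ t ^ (1 - p) :=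
  mul_nonneg (mul_nonneg (hα t) (rpow_nonneg (sig_pos γ τ t).le p))
    (rpow_nonneg (nu_pos γ t).le _)

end Weights

theorem norm_mul_eq_re_inner_of_hasDerivWithinAt {H : Type*} [NormedAddCommGroup H]
    [InnerProductSpace ℂ H] {u : ℝ → H} {u' : H} {n x : ℝ} {s : Set ℝ}
    (hs : UniqueDiffWithinAt ℝ s x) (hu : HasDerivWithinAt u u' s x)
    (hn : HasDerivWithinAt (‖u ·‖) n s x) :
    ‖u x‖ * n = (⟪u x, u'⟫).re := by
  let := InnerProductSpace.rclikeToReal ℂ H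
  have := ((hn.pow 2).derivWithin hs).symm.trans (hu.norm_sq.derivWithin hs)
  rw [real_inner_eq_re_inner, RCLike.re_to_complex] at this
  norm_num at this
  linarith

theorem image_le_of_deriv_right_sub_le_mul_sub {f f' h h' : ℝ → ℝ} {a b K : ℝ}
    (hf : ContinuousOn f (Icc a b)) (hh : ContinuousOn h (Icc a b))
    (hf' : ∀ x ∈ Ico a b, HasDerivWithinAt f (f' x) (Ici x) x)
    (hh' : ∀ x ∈ Ico a b, HasDerivWithinAt h (h' x) (Ici x) x) (ha : f a ≤ h a)
    (bound : ∀ x ∈ Ico a b, h x < f x → f' x - h' x ≤ K * (f x - h x)) :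
    ∀ ⦃x⦄, x ∈ Icc a b → f x ≤ h x := by
  intro x hx
  -- The barrier `h + δ e^{(K+1)(y-a)}` outruns `f` wherever they touch, since `f - h > 0` there.
  have barrier : ∀ δ > 0, f x ≤ h x + δ * exp ((K + 1) * (x - a)) := by
    intro δ hδ
    have hE : ∀ y, HasDerivAt (fun y => δ * exp ((K + 1) * (y - a)))
        (δ * (exp ((K + 1) * (y - a)) * (K + 1))) y := fun y =>
      ((((hasDerivAt_id y).sub_const a).const_mul (K + 1)).exp.const_mul δ).congr_deriv
        (by simp)
    refine image_le_of_deriv_right_lt_deriv_boundary' hf hf' (by simp; linarith)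
      (hh.add (Continuous.continuousOn (by fun_prop)))
      (fun y hy => (hh' y hy).add (hE y).hasDerivWithinAt) (fun y hy hfy => ?_) hx
    rw [Pi.add_apply] at hfy
    have hpos : 0 < δ * exp ((K + 1) * (y - a)) := by positivity
    have := bound y hy (by linarith)
    rw [hfy, add_sub_cancel_left] at this
    linarith
  refine le_of_forall_pos_le_add fun ε hε => ?_
  have hE := exp_pos ((K + 1) * (x - a))
  simpa [div_mul_cancel₀ _ hE.ne'] using barrier (ε / exp ((K + 1) * (x - a))) (by positivity)

theorem le_of_delay_comparison {f f' h h' γ α β : ℝ → ℝ} {τ p : ℝ} (hτ : 0 < τ) (hp : 0 ≤ p)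
    (hγ : Continuous γ) (hα : ∀ t, 0 ≤ α t) (hf0 : ∀ t, 0 ≤ f t)
    (hh0 : ∀ t, 0 ≤ t → 0 ≤ h t)
    (hf' : ∀ t, 0 ≤ t → HasDerivWithinAt f (f' t) (Ici 0) t)
    (hh' : ∀ t, 0 ≤ t → HasDerivWithinAt h (h' t) (Ici 0) t)
    (hf_ineq : ∀ t, 0 ≤ t → 0 < f t → f' t ≤ γ t * f t + α t * f (t - τ) ^ p + β t)
    (hh_ineq : ∀ t, 0 ≤ t → γ t * h t + α t * h (t - τ) ^ p + β t ≤ h' t)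
    (hinit : ∀ t ∈ Icc (-τ) 0, f t ≤ h t) :
    ∀ t, -τ ≤ t → f t ≤ h t := by
  suffices steps : ∀ n : ℕ, ∀ t ∈ Icc (-τ) (n * τ), f t ≤ h t by
    intro t ht
    obtain ⟨n, hn⟩ := exists_nat_ge (t / τ)
    exact steps n t ⟨ht, (div_le_iff₀ hτ).1 hn⟩
  intro n
  induction n with
  | zero => simpa using hinit
  | succ n ih =>
    rintro t ⟨ht, htn⟩
    rcases le_or_gt t (n * τ) with hle | hlt
    · exact ih t ⟨ht, hle⟩
    set a : ℝ := n * τ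
    set b : ℝ := (n + 1 : ℕ) * τ
    have ha : 0 ≤ a := by positivity
    have hsub : Icc a b ⊆ Ici 0 := fun x hx => ha.trans hx.1
    have hsub' : ∀ x ∈ Ico a b, Ici x ⊆ Ici 0 := fun x hx =>
      Ici_subset_Ici.2 (hsub (Ico_subset_Icc_self hx))
    obtain ⟨K, hK⟩ := isCompact_Icc.bddAbove_image (hγ.continuousOn (s := Icc a b))
    refine image_le_of_deriv_right_sub_le_mul_sub (K := K)
      (fun x hx => (hf' x (hsub hx)).continuousWithinAt.mono hsub)
      (fun x hx => (hh' x (hsub hx)).continuousWithinAt.mono hsub)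
      (fun x hx => (hf' x (hsub' x hx self_mem_Ici)).mono (hsub' x hx))
      (fun x hx => (hh' x (hsub' x hx self_mem_Ici)).mono (hsub' x hx))
      (ih a ⟨by linarith, le_rfl⟩) (fun x hx hhf => ?_) ⟨hlt.le, htn⟩
    have hx0 : 0 ≤ x := hsub' x hx self_mem_Ici
    have hdelay : f (x - τ) ≤ h (x - τ) :=
      ih _ ⟨by linarith, by simp only [b, Nat.cast_succ] at hx; linarith [hx.2]⟩
    have hpow : α x * f (x - τ) ^ p ≤ α x * h (x - τ) ^ p :=
      mul_le_mul_of_nonneg_left (rpow_le_rpow (hf0 _) hdelay hp) (hα x)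
    have hγK : γ x * (f x - h x) ≤ K * (f x - h x) :=
      mul_le_mul_of_nonneg_right (hK ⟨x, Ico_subset_Icc_self hx, rfl⟩) (by linarith)
    linarith [hf_ineq x hx0 (by linarith [hh0 x hx0]), hh_ineq x hx0]

theorem norm_le_of_delay_comparison {H : Type*} [NormedAddCommGroup H] [InnerProductSpace ℂ H]
    {u u' : ℝ → H} {h h' γ α β : ℝ → ℝ} {τ p : ℝ} (hτ : 0 < τ) (hp : 0 ≤ p)
    (hγ : Continuous γ) (hα : ∀ t, 0 ≤ α t)
    (hud : ∀ t, 0 ≤ t → HasDerivWithinAt u (u' t) (Ici 0) t)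
    (hnd : ∀ t, 0 ≤ t → DifferentiableWithinAt ℝ (fun s => ‖u s‖) (Ici 0) t)
    (huineq : ∀ t, 0 ≤ t → (⟪u t, u' t⟫).re ≤
      γ t * ‖u t‖ ^ 2 + α t * ‖u t‖ * ‖u (t - τ)‖ ^ p + β t * ‖u t‖)
    (hh0 : ∀ t, -τ ≤ t → 0 ≤ h t)
    (hhd : ∀ t, 0 ≤ t → HasDerivWithinAt h (h' t) (Ici 0) t)
    (hheq : ∀ t, 0 ≤ t → h' t = γ t * h t + α t * h (t - τ) ^ p + β t)
    (hinit : ∀ t, -τ ≤ t → t ≤ 0 → h t = ‖u t‖) :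
    ∀ t, -τ ≤ t → ‖u t‖ ≤ h t := by
  refine le_of_delay_comparison hτ hp hγ hα (fun _ => norm_nonneg _)
    (fun t ht => hh0 t (by linarith)) (fun t ht => (hnd t ht).hasDerivWithinAt) hhd
    (fun t ht hpos => ?_) (fun t ht => (hheq t ht).ge) fun t ht => (hinit t ht.1 ht.2).ge
  refine le_of_mul_le_mul_left ?_ hpos
  rw [norm_mul_eq_re_inner_of_hasDerivWithinAt (uniqueDiffOn_Ici 0 t ht) (hud t ht)
    (hnd t ht).hasDerivWithinAt]
  linear_combination huineq t ht

theorem rpow_one_sub_sub_integral_le {z z' φ : ℝ → ℝ} {a p t : ℝ} (hp : 1 < p)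
    (hφ : Continuous φ) (hz : ContinuousOn z (Ici a))
    (hz' : ∀ x, a < x → HasDerivAt z (z' x) x) (hpos : ∀ x, a ≤ x → 0 < z x)
    (hle : ∀ x, a < x → z' x ≤ φ x * z x ^ p) (ht : a ≤ t) :
    z a ^ (1 - p) - (p - 1) * ∫ x in a..t, φ x ≤ z t ^ (1 - p) := by
  set ψ := fun s => z s ^ (1 - p) + (p - 1) * ∫ x in a..s, φ x
  have hψ' : ∀ x, a < x →
      HasDerivAt ψ (z' x * (1 - p) * z x ^ (1 - p - 1) + (p - 1) * φ x) x := fun x hx =>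
    ((hz' x hx).rpow_const (.inl (hpos x hx.le).ne')).add
      ((hφ.integral_hasStrictDerivAt a x).hasDerivAt.const_mul (p - 1))
  have hmono : MonotoneOn ψ (Ici a) := by
    refine monotoneOn_of_deriv_nonneg (convex_Ici a) ?_ ?_ ?_
    · exact (hz.rpow_const fun x hx => .inl (hpos x hx).ne').add (continuous_const.mul
        (intervalIntegral.continuous_primitive (fun _ _ => hφ.intervalIntegrable _ _) a)).continuousOn
    · rw [interior_Ici]
      exact fun x hx => (hψ' x hx).differentiableAt.differentiableWithinAt
    · rw [interior_Ici]
      intro x hx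
      rw [(hψ' x hx).deriv, show 1 - p - 1 = -p by ring]
      have hzx := hpos x hx.le
      have : z' x * z x ^ (-p) ≤ φ x :=
        calc z' x * z x ^ (-p) ≤ φ x * z x ^ p * z x ^ (-p) :=
              mul_le_mul_of_nonneg_right (hle x hx) (rpow_nonneg hzx.le _)
          _ = φ x := by rw [mul_assoc, ← rpow_add hzx, add_neg_cancel, rpow_zero, mul_one]
      nlinarith
  have := hmono self_mem_Ici ht ht
  simp only [ψ, intervalIntegral.integral_same, mul_zero, add_zero] at this
  linarith

theorem lt_rpow_one_sub_of_lt_rpow {p y z : ℝ} (hp : 1 < p) (hy : 0 ≤ y) (hz : 0 < z)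
    (h : z < y ^ (-(1 / (p - 1)))) : y < z ^ (1 - p) := by
  have hp' : p - 1 ≠ 0 := by linarith
  rcases hy.eq_or_lt with rfl | hy
  · -- `0 ^ x = 0` for `x ≠ 0`, so `h` says `z < 0`.
    rw [zero_rpow (by simp; linarith)] at h
    linarith
  have := rpow_lt_rpow_of_neg hz h (by linarith : 1 - p < 0)
  rwa [← rpow_mul hy.le, show -(1 / (p - 1)) * (1 - p) = 1 by field_simp; ring, rpow_one] at this

theorem le_rpow_of_le_rpow_one_sub {p c z : ℝ} (hp : 1 < p) (hc : 0 < c) (hz : 0 < z)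
    (h : c ≤ z ^ (1 - p)) : z ≤ c ^ (-(1 / (p - 1))) := by
  have hp' : p - 1 ≠ 0 := by linarith
  have := rpow_le_rpow_of_nonpos (z := -(1 / (p - 1))) hc h
    (neg_nonpos.2 (one_div_pos.2 (by linarith)).le)
  rwa [← rpow_mul hz.le, show (1 - p) * -(1 / (p - 1)) = 1 by field_simp; ring, rpow_one] at this

section NuMul

variable {τ p : ℝ} {γ α β h h' : ℝ → ℝ}

theorem hasDerivWithinAt_nu_mul (hγ : Continuous γ) {s : Set ℝ} {t : ℝ}
    (hh : HasDerivWithinAt h (h' t) s t) (hh' : h' t = γ t * h t + α t * h (t - τ) ^ p + β t) :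
    HasDerivWithinAt (fun s => nu γ s * h s) (nu γ t * (α t * h (t - τ) ^ p + β t)) s t :=
  ((hasDerivAt_nu hγ t).hasDerivWithinAt.mul hh).congr_deriv (by rw [hh']; ring)

theorem nu_mul_eq_add_integral {g : ℝ → ℝ} (hτ : 0 < τ) (hp : 0 ≤ p) (hγ : Continuous γ)
    (hα : Continuous α) (hβ : Continuous β) (hhc : ContinuousOn h (Ici (-τ)))
    (hhd : ∀ t, 0 ≤ t → HasDerivWithinAt h (h' t) (Ici 0) t)
    (hheq : ∀ t, 0 ≤ t → h' t = γ t * h t + α t * h (t - τ) ^ p + β t)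
    (hinit : ∀ t, -τ ≤ t → t ≤ 0 → h t = g t) :
    nu γ τ * h τ = g 0 + ∫ ξ in (0:ℝ)..τ, (α ξ * nu γ ξ * g (ξ - τ) ^ p + β ξ * nu γ ξ) := by
  have hsub : Icc 0 τ ⊆ Ici (-τ) := fun x hx => le_trans (by linarith) hx.1
  have hdelay : ContinuousOn (fun ξ => h (ξ - τ)) (Icc 0 τ) :=
    hhc.comp (continuousOn_id.sub continuousOn_const) fun x hx => by simp; linarith [hx.1]
  have hint : IntervalIntegrable (fun ξ => nu γ ξ * (α ξ * h (ξ - τ) ^ p + β ξ)) volume 0 τ := by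
    refine ContinuousOn.intervalIntegrable ?_
    rw [uIcc_of_le hτ.le]
    exact (continuous_nu hγ).continuousOn.mul ((hα.continuousOn.mul
      (hdelay.rpow_const fun x hx => .inr hp)).add hβ.continuousOn)
  have hFTC := intervalIntegral.integral_eq_sub_of_hasDeriv_right_of_le hτ.le
    ((continuous_nu hγ).continuousOn.mul (hhc.mono hsub))
    (fun x hx => (hasDerivWithinAt_nu_mul hγ (hhd x hx.1.le) (hheq x hx.1.le)).mono
      fun y (hy : x < y) => hx.1.le.trans hy.le) hint
  simp only [Pi.mul_apply, nu_zero, one_mul] at hFTC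
  rw [← hinit 0 (by linarith) le_rfl, ← sub_eq_iff_eq_add', ← hFTC]
  refine intervalIntegral.integral_congr fun ξ hξ => ?_
  rw [uIcc_of_le hτ.le] at hξ
  simp only [hinit (ξ - τ) (by linarith [hξ.1]) (by linarith [hξ.2])]
  ring

theorem monotoneOn_nu_mul (hγ : Continuous γ) (hα : ∀ t, 0 ≤ α t) (hβ : ∀ t, 0 ≤ β t)
    (hh0 : ∀ t, -τ ≤ t → 0 ≤ h t) (hhd : ∀ t, 0 ≤ t → HasDerivWithinAt h (h' t) (Ici 0) t)
    (hheq : ∀ t, 0 ≤ t → h' t = γ t * h t + α t * h (t - τ) ^ p + β t) :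
    MonotoneOn (fun s => nu γ s * h s) (Ici 0) := by
  have hd := fun t (ht : 0 ≤ t) => hasDerivWithinAt_nu_mul hγ (hhd t ht) (hheq t ht)
  refine monotoneOn_of_hasDerivWithinAt_nonneg
    (f' := fun t => nu γ t * (α t * h (t - τ) ^ p + β t)) (convex_Ici 0)
    (fun t ht => (hd t ht).continuousWithinAt) (fun t ht => ?_) fun t ht => ?_
  · rw [interior_Ici] at ht ⊢
    exact (hd t (le_of_lt ht)).mono Ioi_subset_Ici_self
  · rw [interior_Ici] at ht
    exact mul_nonneg (nu_pos γ t).le (add_nonneg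
      (mul_nonneg (hα t) (rpow_nonneg (hh0 _ (by linarith [mem_Ioi.1 ht])) p)) (hβ t))

theorem nu_mul_rhs_le_weight_mul (hγ : Continuous γ) (hp : 1 ≤ p) {s ω : ℝ} (hαs : 0 < α s)
    (hβs : 0 ≤ β s) (hhs : 0 ≤ h (s - τ)) (hω0 : 0 ≤ ω)
    (hmono : nu γ (s - τ) * h (s - τ) ≤ nu γ s * h s)
    (hω : (β s / α s) ^ (1 / p) * nu γ (s - τ) ≤ ω) :
    nu γ s * (α s * h (s - τ) ^ p + β s) ≤
      α s * sig γ τ s ^ p * nu γ s ^ (1 - p) * (nu γ s * h s + ω) ^ p := by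
  set W := α s * sig γ τ s ^ p * nu γ s ^ (1 - p)
  have hW : 0 ≤ W := weight_nonneg (fun _ => hαs.le) τ p s
  have hWν : W * nu γ (s - τ) ^ p = α s * nu γ s := by
    rw [mul_assoc, mul_assoc, ← mul_assoc (sig γ τ s ^ p),
      sig_rpow_mul_nu_rpow_mul_nu_sub_rpow hγ]
  have hν := (nu_pos γ (s - τ)).le
  have hβα : 0 ≤ β s / α s := div_nonneg hβs hαs.le
  calc nu γ s * (α s * h (s - τ) ^ p + β s)
      = W * (nu γ (s - τ) * h (s - τ)) ^ p
          + W * ((β s / α s) ^ (1 / p) * nu γ (s - τ)) ^ p := by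
        rw [mul_rpow hν hhs, mul_rpow (rpow_nonneg hβα _) hν, ← rpow_mul hβα,
          one_div_mul_cancel (by linarith), rpow_one,
          show W * (nu γ (s - τ) ^ p * h (s - τ) ^ p) + W * (β s / α s * nu γ (s - τ) ^ p)
            = W * nu γ (s - τ) ^ p * (h (s - τ) ^ p + β s / α s) by ring, hWν]
        field_simp
    _ ≤ W * (nu γ s * h s) ^ p + W * ω ^ p := by gcongr
    _ ≤ W * (nu γ s * h s + ω) ^ p := by
        rw [← mul_add]
        exact mul_le_mul_of_nonneg_left
          (add_rpow_le_rpow_add ((mul_nonneg hν hhs).trans hmono) hω0 hp) hW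

theorem le_nu_mul_add_rpow_one_sub {ω : ℝ} (hτ : 0 < τ) (hp : 1 < p) (hγ : Continuous γ)
    (hαc : Continuous α) (hα : ∀ t, 0 ≤ α t) (hαpos : ∀ t, τ ≤ t → 0 < α t) (hβ : ∀ t, 0 ≤ β t)
    (hh0 : ∀ t, -τ ≤ t → 0 ≤ h t) (hhd : ∀ t, 0 ≤ t → HasDerivWithinAt h (h' t) (Ici 0) t)
    (hheq : ∀ t, 0 ≤ t → h' t = γ t * h t + α t * h (t - τ) ^ p + β t) (hωpos : 0 < ω)
    (hω : ∀ t, τ ≤ t → (β t / α t) ^ (1 / p) * nu γ (t - τ) ≤ ω) {t : ℝ} (ht : τ ≤ t) :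
    (nu γ τ * h τ + ω) ^ (1 - p) - (p - 1) * ∫ ξ in τ..t, α ξ * sig γ τ ξ ^ p * nu γ ξ ^ (1 - p)
      ≤ (nu γ t * h t + ω) ^ (1 - p) := by
  have hIci : Ici τ ⊆ Ici 0 := Ici_subset_Ici.2 hτ.le
  have hw' := fun s (hs : 0 ≤ s) => hasDerivWithinAt_nu_mul hγ (hhd s hs) (hheq s hs)
  exact rpow_one_sub_sub_integral_le (z := fun s => nu γ s * h s + ω) hp
    (continuous_weight hγ hαc τ p)
    (fun s hs => ((hw' s (hIci hs)).continuousWithinAt.mono hIci).add continuousWithinAt_const)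
    (fun s hs => ((hw' s (hIci hs.le)).hasDerivAt (Ici_mem_nhds (hτ.trans hs))).add_const ω)
    (fun s hs => add_pos_of_nonneg_of_pos
      (mul_nonneg (nu_pos γ s).le (hh0 s (by linarith))) hωpos)
    (fun s hs => nu_mul_rhs_le_weight_mul hγ hp.le (hαpos s hs.le) (hβ s)
      (hh0 (s - τ) (by linarith)) hωpos.le
      (monotoneOn_nu_mul hγ hα hβ hh0 hhd hheq (sub_nonneg.2 hs.le) (hIci hs.le) (by linarith))
      (hω s hs.le)) ht

end NuMul

theorem stmt_8_general
    {H : Type*} [NormedAddCommGroup H] [InnerProductSpace ℂ H]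
    (τ p : ℝ) (hτ : 0 < τ) (hp : 1 < p)
    (γ α β : ℝ → ℝ)
    (hγc : Continuous γ) (hαc : Continuous α) (hβc : Continuous β)
    (hα : ∀ t, 0 ≤ α t) (hβ : ∀ t, 0 ≤ β t)
    (u : ℝ → H) (u' : ℝ → H)
    (hud : ∀ t, 0 ≤ t → HasDerivWithinAt u (u' t) (Ici (0:ℝ)) t)
    (hnd : ∀ t, 0 ≤ t → DifferentiableWithinAt ℝ (fun s => ‖u s‖) (Ici (0:ℝ)) t)
    (huineq : ∀ t, 0 ≤ t → (⟪u t, u' t⟫).re ≤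
      γ t * ‖u t‖ ^ 2 + α t * ‖u t‖ * ‖u (t - τ)‖ ^ p + β t * ‖u t‖)
    (h h' : ℝ → ℝ)
    (hh0 : ∀ t, -τ ≤ t → 0 ≤ h t)
    (hhc : ContinuousOn h (Ici (-τ)))
    (hhd : ∀ t, 0 ≤ t → HasDerivWithinAt h (h' t) (Ici (0:ℝ)) t)
    (hheq : ∀ t, 0 ≤ t → h' t = γ t * h t + α t * h (t - τ) ^ p + β t)
    (hinit : ∀ t, -τ ≤ t → t ≤ 0 → h t = ‖u t‖)
    (hτv : ℝ)
    (hτvdef : hτv = (‖u 0‖ + ∫ ξ in (0:ℝ)..τ,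
        (α ξ * nu γ ξ * ‖u (ξ - τ)‖ ^ p + β ξ * nu γ ξ)) / nu γ τ)
    (hαpos : ∀ t, τ ≤ t → 0 < α t)
    (I : ℝ)
    (hint : IntegrableOn (fun ξ => α ξ * sig γ τ ξ ^ p * nu γ ξ ^ (1 - p)) (Ici τ))
    (hI : I = ∫ ξ in Ici τ, α ξ * sig γ τ ξ ^ p * nu γ ξ ^ (1 - p))
    (ω : ℝ)
    (hω : IsLUB {x : ℝ | ∃ t, τ ≤ t ∧
        x = (β t / α t) ^ (1 / p) * Real.exp (-∫ ξ in (0:ℝ)..(t - τ), γ ξ)} ω)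
    (hωpos : 0 < ω)
    (hωlt : ω < ((p - 1) * I) ^ (-(1 / (p - 1))) - hτv * nu γ τ) :
    ∀ t, τ ≤ t →
      ‖u t‖ ≤ (1 / nu γ t) * (((hτv * nu γ τ + ω) ^ (1 - p)
          - (p - 1) * ∫ ξ in τ..t, α ξ * sig γ τ ξ ^ p * nu γ ξ ^ (1 - p))
            ^ (-(1 / (p - 1))) - ω) := by
  intro t ht
  have hp0 : 0 ≤ p := by linarith
  have hzpos : ∀ s, 0 ≤ s → 0 < nu γ s * h s + ω := fun s hs =>
    add_pos_of_nonneg_of_pos (mul_nonneg (nu_pos γ s).le (hh0 s (by linarith))) hωpos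
  have hwτ : nu γ τ * h τ = hτv * nu γ τ := by
    rw [hτvdef, div_mul_cancel₀ _ (nu_pos γ τ).ne']
    exact nu_mul_eq_add_integral hτ hp0 hγc hαc hβc hhc hhd hheq hinit
  have hbound := le_nu_mul_add_rpow_one_sub hτ hp hγc hαc hα hαpos hβ hh0 hhd hheq hωpos
    (fun s hs => hω.1 ⟨s, hs, rfl⟩) ht
  rw [hwτ] at hbound
  have hI0 : 0 ≤ I := hI ▸ setIntegral_nonneg measurableSet_Ici fun ξ _ => weight_nonneg hα τ p ξ
  have hPI : ∫ ξ in τ..t, α ξ * sig γ τ ξ ^ p * nu γ ξ ^ (1 - p) ≤ I := by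
    rw [intervalIntegral.integral_of_le ht, hI]
    exact setIntegral_mono_set hint (.of_forall fun ξ => weight_nonneg hα τ p ξ)
      (Ioc_subset_Ioi_self.trans Ioi_subset_Ici_self).eventuallyLE
  have hzτ : (p - 1) * I < (hτv * nu γ τ + ω) ^ (1 - p) :=
    lt_rpow_one_sub_of_lt_rpow hp (mul_nonneg (by linarith) hI0) (hwτ ▸ hzpos τ hτ.le)
      (by linarith)
  have hc : 0 < (hτv * nu γ τ + ω) ^ (1 - p)
      - (p - 1) * ∫ ξ in τ..t, α ξ * sig γ τ ξ ^ p * nu γ ξ ^ (1 - p) := by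
    linarith [mul_le_mul_of_nonneg_left hPI (by linarith : 0 ≤ p - 1)]
  calc ‖u t‖ ≤ h t := norm_le_of_delay_comparison hτ hp0 hγc hα hud hnd huineq hh0 hhd hheq hinit
        t (by linarith)
    _ = 1 / nu γ t * (nu γ t * h t) := by field_simp [(nu_pos γ t).ne']
    _ ≤ _ := mul_le_mul_of_nonneg_left
      (by linarith [le_rpow_of_le_rpow_one_sub hp hc (hzpos t (by linarith)) hbound])
      (one_div_pos.2 (nu_pos γ t)).le

/-- Theorem 2.5 (Theorem 1), the estimate (27) for the solution `u`. -/
theorem stmt_8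
    {H : Type*} [NormedAddCommGroup H] [InnerProductSpace ℂ H]
    (τ p : ℝ) (hτ : 0 < τ) (hp : 1 < p)
    (γ α β : ℝ → ℝ)
    (hγc : Continuous γ) (hαc : Continuous α) (hβc : Continuous β)
    (hα : ∀ t, 0 ≤ α t) (hβ : ∀ t, 0 ≤ β t)
    (u : ℝ → H) (u' : ℝ → H)
    (huc : ContinuousOn u (Ici (-τ)))
    (hud : ∀ t, 0 ≤ t → HasDerivWithinAt u (u' t) (Ici (0:ℝ)) t)
    (hnd : ∀ t, 0 ≤ t → DifferentiableWithinAt ℝ (fun s => ‖u s‖) (Ici (0:ℝ)) t)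
    (huineq : ∀ t, 0 ≤ t → (⟪u t, u' t⟫).re ≤
      γ t * ‖u t‖ ^ 2 + α t * ‖u t‖ * ‖u (t - τ)‖ ^ p + β t * ‖u t‖)
    (h h' : ℝ → ℝ)
    (hh0 : ∀ t, -τ ≤ t → 0 ≤ h t)
    (hhc : ContinuousOn h (Ici (-τ)))
    (hhd : ∀ t, 0 ≤ t → HasDerivWithinAt h (h' t) (Ici (0:ℝ)) t)
    (hheq : ∀ t, 0 ≤ t → h' t = γ t * h t + α t * h (t - τ) ^ p + β t)
    (hinit : ∀ t, -τ ≤ t → t ≤ 0 → h t = ‖u t‖)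
    (hτv : ℝ)
    (hτvdef : hτv = (‖u 0‖ + ∫ ξ in (0:ℝ)..τ,
        (α ξ * nu γ ξ * ‖u (ξ - τ)‖ ^ p + β ξ * nu γ ξ)) / nu γ τ)
    (hαpos : ∀ t, τ ≤ t → 0 < α t)
    (I : ℝ)
    (hint : IntegrableOn (fun ξ => α ξ * sig γ τ ξ ^ p * nu γ ξ ^ (1 - p)) (Ici τ))
    (hI : I = ∫ ξ in Ici τ, α ξ * sig γ τ ξ ^ p * nu γ ξ ^ (1 - p))
    (ω : ℝ)
    (hω : IsLUB {x : ℝ | ∃ t, τ ≤ t ∧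
        x = (β t / α t) ^ (1 / p) * Real.exp (-∫ ξ in (0:ℝ)..(t - τ), γ ξ)} ω)
    (hωpos : 0 < ω)
    (hωlt : ω < ((p - 1) * I) ^ (-(1 / (p - 1))) - hτv * nu γ τ) :
    ∀ t, τ ≤ t →
      ‖u t‖ ≤ (1 / nu γ t) * (((hτv * nu γ τ + ω) ^ (1 - p)
          - (p - 1) * ∫ ξ in τ..t, α ξ * sig γ τ ξ ^ p * nu γ ξ ^ (1 - p))
            ^ (-(1 / (p - 1))) - ω) :=
  stmt_8_general τ p hτ hp γ α β hγc hαc hβc hα hβ u u' hud hnd huineq h h' hh0 hhc hhd hheq hinit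
    hτv hτvdef hαpos I hint hI ω hω hωpos hωlt
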